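/- Shift relation for the shift (e₁,e₆) → (e₁+1,e₆+1) of the equation E₃f: let P = x(x−1)²∂² + (x−1)((e₅+e₆+1)x+e₁−1)∂ + e₅e₆x − e₁/2 − e₆/2 + e₁²/2 + e₁e₃/2 + e₅e₁/2 + e₆e₁ + e₆e₃/2 − e₅e₆/2 + e₆²/2, and Q = x(x−1)²∂² + (x−1)((e₅+e₆+2)x+e₁)∂ + (e₅e₆+e₅)x + e₁²/2 + e₁e₃/2 + e₅e₁/2 + e₆e₁ + e₆e₃/2 − e₅e₆/2 + e₆²/2 + e₁/2 + e₆/2. Then for every function u holomorphic on an open set U ⊆ ℂ∖{0,1} and every x ∈ U, (E₃f(e₁+1,e₃,e₅,e₆+1)(P u))(x) = (Q (E₃f(e₁,e₃,e₅,e₆) u))(x). -/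

import Mathlib

/-!
STATEMENT 19: Shift relation for the shift (e₁,e₆) → (e₁+1,e₆+1) of the
equation E₃f(e₁,e₃,e₅,e₆) := E₃(e₁, −e₁−e₃−e₅+1, e₃, e₃−e₅+1, e₅, e₆):
E₃f(e₁+1,e₃,e₅,e₆+1) ∘ P = Q ∘ E₃f(e₁,e₃,e₅,e₆).
-/

/-- The accessory parameter A₀₀(e₁,…,e₆) of the equation E₃,
with e₇ := 3 − (e₁+⋯+e₆). -/
noncomputable def A00 (e1 e2 e3 e4 e5 e6 : ℂ) : ℂ :=
  let e7 := 3 - (e1 + e2 + e3 + e4 + e5 + e6)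
  (-4*(e1 + e2 - e3 - e4)^3 - 27*e5*e6*e7
    + 9*(e1 + e2 - e3 - e4)*(e5*e6 + e5*e7 + e6*e7 - 2)
    + 9*e1*e2*(e1 + e2 - 1) + 18*(e1 + e2 - 1)*(e3^2 + e3*e4 + e4^2)
    - 9*e3*e4*(e3 + e4 - 1) - 18*(e3 + e4 - 1)*(e1^2 + e1*e2 + e2^2)) / 54

/-- Coefficient of ∂³ of E₃. -/
noncomputable def E3c3 (x : ℂ) : ℂ := x^2*(x - 1)^2

/-- Coefficient of ∂² of E₃. -/
noncomputable def E3c2 (e1 e2 e3 e4 e5 e6 : ℂ) (x : ℂ) : ℂ :=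
  x*(x - 1)*((6 - e1 - e2 - e3 - e4)*x + e1 + e2 - 3)

/-- Coefficient of ∂ of E₃. -/
noncomputable def E3c1 (e1 e2 e3 e4 e5 e6 : ℂ) (x : ℂ) : ℂ :=
  let e7 := 3 - (e1 + e2 + e3 + e4 + e5 + e6)
  ((e5 + e6 + 1)*e7 + (e6 + 1)*(e5 + 1)) * x^2
  + (-(e5 + e6)*e7 - e1*e2 + e3*e4 - e5*e6 + 2*e1 + 2*e2 - 4) * x
  + (e1 - 1)*(e2 - 1)

/-- Coefficient of 1 of E₃. -/
noncomputable def E3c0 (e1 e2 e3 e4 e5 e6 : ℂ) (x : ℂ) : ℂ :=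
  let e7 := 3 - (e1 + e2 + e3 + e4 + e5 + e6)
  (e5*e6*e7) * x + A00 e1 e2 e3 e4 e5 e6

/-- The operator E₃(e₁,…,e₆) acting on a function u. -/
noncomputable def E3op (e1 e2 e3 e4 e5 e6 : ℂ) (u : ℂ → ℂ) : ℂ → ℂ := fun x =>
  E3c3 x * iteratedDeriv 3 u x + E3c2 e1 e2 e3 e4 e5 e6 x * iteratedDeriv 2 u x
    + E3c1 e1 e2 e3 e4 e5 e6 x * deriv u x + E3c0 e1 e2 e3 e4 e5 e6 x * u x

/-- The operator E₃f(e₁,e₃,e₅,e₆) := E₃(e₁, −e₁−e₃−e₅+1, e₃, e₃−e₅+1, e₅, e₆). -/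
noncomputable def E3fop (e1 e3 e5 e6 : ℂ) (u : ℂ → ℂ) : ℂ → ℂ :=
  E3op e1 (-e1 - e3 - e5 + 1) e3 (e3 - e5 + 1) e5 e6 u

/-- The shift operator P for (e₁,e₆) → (e₁+1,e₆+1) acting on a function u. -/
noncomputable def Pf (e1 e3 e5 e6 : ℂ) (u : ℂ → ℂ) : ℂ → ℂ := fun x =>
  x*(x - 1)^2 * iteratedDeriv 2 u x
  + (x - 1)*((e5 + e6 + 1)*x + e1 - 1) * deriv u x
  + (e5*e6*x - e1/2 - e6/2 + e1^2/2 + e1*e3/2 + e5*e1/2 + e6*e1 + e6*e3/2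
      - e5*e6/2 + e6^2/2) * u x

/-- The shift operator Q for (e₁,e₆) → (e₁+1,e₆+1) acting on a function u. -/
noncomputable def Qf (e1 e3 e5 e6 : ℂ) (u : ℂ → ℂ) : ℂ → ℂ := fun x =>
  x*(x - 1)^2 * iteratedDeriv 2 u x
  + (x - 1)*((e5 + e6 + 2)*x + e1) * deriv u x
  + ((e5*e6 + e5)*x + e1^2/2 + e1*e3/2 + e5*e1/2 + e6*e1 + e6*e3/2
      - e5*e6/2 + e6^2/2 + e1/2 + e6/2) * u x

/-!
Work with differential operators `∑ cᵢ(x) ∂ⁱ` with polynomial coefficients. Where `u` is smooth on an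
open set, the Leibniz rule `∂ ∘ c∂ⁱ = c'∂ⁱ + c∂ⁱ⁺¹` identifies the derivative of `L u` with `(∂ ∘ L) u`,
and iterating gives `L (M u) = (L ∘ M) u`. Both sides of the shift relation thus become fifth-order
operators with polynomial coefficients applied to `u`, and they agree by a polynomial identity.
-/

open Polynomial

/-- `L i` is the coefficient of `∂ⁱ`. -/
abbrev PolyDiffOp (𝕜 : Type*) [Semiring 𝕜] := ℕ →₀ 𝕜[X]

namespace PolyDiffOp

variable {𝕜 : Type*} [NontriviallyNormedField 𝕜] {F : Type*} [NormedAddCommGroup F] [NormedSpace 𝕜 F]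

noncomputable def act (L : PolyDiffOp 𝕜) (u : 𝕜 → F) (x : 𝕜) : F :=
  L.sum fun i c => c.eval x • iteratedDeriv i u x

/-- `∂ ∘ L`, by the Leibniz rule. -/
noncomputable def derivComp : PolyDiffOp 𝕜 →ₗ[𝕜] PolyDiffOp 𝕜 :=
  Finsupp.mapRange.linearMap derivative + Finsupp.lmapDomain 𝕜[X] 𝕜 Nat.succ

noncomputable def comp (L M : PolyDiffOp 𝕜) : PolyDiffOp 𝕜 :=
  L.sum fun i c => c • derivComp^[i] M

@[simp] lemma act_zero (u : 𝕜 → F) : act (0 : PolyDiffOp 𝕜) u = 0 := by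
  ext x
  simp [act]

@[simp] lemma act_add (L M : PolyDiffOp 𝕜) (u : 𝕜 → F) : act (L + M) u = act L u + act M u := by
  ext x
  exact Finsupp.sum_add_index' (fun _ => by simp) fun _ _ _ => by simp [add_smul]

@[simp] lemma act_single (i : ℕ) (c : 𝕜[X]) (u : 𝕜 → F) :
    act (Finsupp.single i c) u = fun x => c.eval x • iteratedDeriv i u x := by
  ext x
  simp [act]

@[simp] lemma act_smul (c : 𝕜[X]) (L : PolyDiffOp 𝕜) (u : 𝕜 → F) :
    act (c • L) u = fun x => c.eval x • act L u x := by
  induction L using Finsupp.induction_linear with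
  | zero => ext; simp
  | add L M hL hM => ext; simp [smul_add, hL, hM]
  | single i d =>
    ext
    simp only [Finsupp.smul_single, smul_eq_mul, act_single, eval_mul, mul_smul]

@[simp] lemma derivComp_single (i : ℕ) (c : 𝕜[X]) :
    derivComp (Finsupp.single i c) = Finsupp.single i (derivative c) + Finsupp.single (i + 1) c := by
  simp [derivComp]

@[simp] lemma add_comp (L₁ L₂ M : PolyDiffOp 𝕜) : comp (L₁ + L₂) M = comp L₁ M + comp L₂ M :=
  Finsupp.sum_add_index' (fun _ => zero_smul _ _) fun _ _ _ => add_smul _ _ _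

@[simp] lemma single_comp (i : ℕ) (c : 𝕜[X]) (M : PolyDiffOp 𝕜) :
    comp (Finsupp.single i c) M = c • derivComp^[i] M :=
  Finsupp.sum_single_index (zero_smul _ _)

lemma hasDerivAt_act (L : PolyDiffOp 𝕜) {u : 𝕜 → F} {x : 𝕜}
    (hu : ∀ i, DifferentiableAt 𝕜 (iteratedDeriv i u) x) :
    HasDerivAt (act L u) (act (derivComp L) u x) x := by
  induction L using Finsupp.induction_linear with
  | zero => simp
  | add L M hL hM => simpa using hL.add hM
  | single i c =>
    have h := (c.hasDerivAt x).fun_smul (hu i).hasDerivAt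
    rw [← iteratedDeriv_succ] at h
    simpa [add_comm] using h

section OpenSet

variable {u : 𝕜 → F} {U : Set 𝕜} (hU : IsOpen U) (hu : ∀ i, DifferentiableOn 𝕜 (iteratedDeriv i u) U)
include hU hu

lemma iteratedDeriv_act (L : PolyDiffOp 𝕜) (k : ℕ) :
    Set.EqOn (iteratedDeriv k (act L u)) (act (derivComp^[k] L) u) U := by
  induction k with
  | zero => intro x _; simp
  | succ k ih =>
    intro x hx
    have hdiff i : DifferentiableAt 𝕜 (iteratedDeriv i u) x :=
      (hu i x hx).differentiableAt (hU.mem_nhds hx)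
    rw [iteratedDeriv_succ, (ih.eventuallyEq_of_mem (hU.mem_nhds hx)).deriv_eq,
      Function.iterate_succ_apply', (hasDerivAt_act _ hdiff).deriv]

lemma act_comp (L M : PolyDiffOp 𝕜) {x : 𝕜} (hx : x ∈ U) :
    act (comp L M) u x = act L (act M u) x := by
  induction L using Finsupp.induction_linear with
  | zero => simp [comp]
  | add L₁ L₂ h₁ h₂ => simp [h₁, h₂]
  | single i c => simp [iteratedDeriv_act hU hu M i hx]

end OpenSet

end PolyDiffOp

open PolyDiffOp Finsupp

noncomputable def e3Op (e1 e2 e3 e4 e5 e6 : ℂ) : PolyDiffOp ℂ :=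
  let e7 := 3 - (e1 + e2 + e3 + e4 + e5 + e6)
  single 3 (X^2 * (X - 1)^2)
  + single 2 (X * (X - 1) * (C (6 - e1 - e2 - e3 - e4) * X + C (e1 + e2 - 3)))
  + single 1 (C ((e5 + e6 + 1)*e7 + (e6 + 1)*(e5 + 1)) * X^2
      + C (-(e5 + e6)*e7 - e1*e2 + e3*e4 - e5*e6 + 2*e1 + 2*e2 - 4) * X + C ((e1 - 1)*(e2 - 1)))
  + single 0 (C (e5*e6*e7) * X + C (A00 e1 e2 e3 e4 e5 e6))

noncomputable def shiftPOp (e1 e3 e5 e6 : ℂ) : PolyDiffOp ℂ :=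
  single 2 (X * (X - 1)^2)
  + single 1 ((X - 1) * (C (e5 + e6 + 1) * X + C (e1 - 1)))
  + single 0 (C (e5*e6) * X + C (- e1/2 - e6/2 + e1^2/2 + e1*e3/2 + e5*e1/2 + e6*e1 + e6*e3/2
      - e5*e6/2 + e6^2/2))

noncomputable def shiftQOp (e1 e3 e5 e6 : ℂ) : PolyDiffOp ℂ :=
  single 2 (X * (X - 1)^2)
  + single 1 ((X - 1) * (C (e5 + e6 + 2) * X + C e1))
  + single 0 (C (e5*e6 + e5) * X + C (e1^2/2 + e1*e3/2 + e5*e1/2 + e6*e1 + e6*e3/2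
      - e5*e6/2 + e6^2/2 + e1/2 + e6/2))

lemma E3op_eq_act (e1 e2 e3 e4 e5 e6 : ℂ) (u : ℂ → ℂ) :
    E3op e1 e2 e3 e4 e5 e6 u = act (e3Op e1 e2 e3 e4 e5 e6) u := by
  ext x
  simp only [E3op, E3c3, E3c2, E3c1, E3c0, e3Op, act_add, act_single, Pi.add_apply,
    iteratedDeriv_one, iteratedDeriv_zero, eval_add, eval_sub, eval_mul, eval_pow, eval_C, eval_X,
    eval_one, smul_eq_mul]
  ring

lemma Pf_eq_act (e1 e3 e5 e6 : ℂ) (u : ℂ → ℂ) : Pf e1 e3 e5 e6 u = act (shiftPOp e1 e3 e5 e6) u := by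
  ext x
  simp only [Pf, shiftPOp, act_add, act_single, Pi.add_apply, iteratedDeriv_one, iteratedDeriv_zero,
    eval_add, eval_sub, eval_mul, eval_pow, eval_C, eval_X, eval_one, smul_eq_mul]
  ring

lemma Qf_eq_act (e1 e3 e5 e6 : ℂ) (u : ℂ → ℂ) : Qf e1 e3 e5 e6 u = act (shiftQOp e1 e3 e5 e6) u := by
  ext x
  simp only [Qf, shiftQOp, act_add, act_single, Pi.add_apply, iteratedDeriv_one, iteratedDeriv_zero,
    eval_add, eval_sub, eval_mul, eval_pow, eval_C, eval_X, eval_one, smul_eq_mul]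
  ring

theorem E3f_shift_general (e1 e3 e5 e6 : ℂ) (U : Set ℂ) (hU : IsOpen U)
    (u : ℂ → ℂ) (hu : DifferentiableOn ℂ u U) (x : ℂ) (hx : x ∈ U) :
    E3fop (e1 + 1) e3 e5 (e6 + 1) (Pf e1 e3 e5 e6 u) x
      = Qf e1 e3 e5 e6 (E3fop e1 e3 e5 e6 u) x := by
  have hu' i : DifferentiableOn ℂ (iteratedDeriv i u) U := by
    rw [iteratedDeriv_eq_iterate]
    exact ((hu.analyticOnNhd hU).iterated_deriv i).differentiableOn
  simp only [E3fop, E3op_eq_act, Pf_eq_act, Qf_eq_act, ← act_comp hU hu' _ _ hx]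
  simp only [e3Op, shiftPOp, shiftQOp, PolyDiffOp.add_comp, single_comp, act_add, act_smul,
    Pi.add_apply, Function.iterate_succ_apply', Function.iterate_zero_apply, map_add,
    derivComp_single, act_single]
  simp only [derivative_mul, derivative_X, derivative_C, derivative_pow, derivative_sub,
    derivative_add, derivative_one, derivative_zero, Nat.reduceSub, Nat.cast_ofNat, pow_one,
    eval_add, eval_sub, eval_mul, eval_pow, eval_C, eval_X, eval_one, eval_zero, smul_eq_mul, A00]
  ring

theorem E3f_shift (e1 e3 e5 e6 : ℂ) (U : Set ℂ) (hU : IsOpen U)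
    (hU0 : (0 : ℂ) ∉ U) (hU1 : (1 : ℂ) ∉ U)
    (u : ℂ → ℂ) (hu : DifferentiableOn ℂ u U) (x : ℂ) (hx : x ∈ U) :
    E3fop (e1 + 1) e3 e5 (e6 + 1) (Pf e1 e3 e5 e6 u) x
      = Qf e1 e3 e5 e6 (E3fop e1 e3 e5 e6 u) x :=
  E3f_shift_general e1 e3 e5 e6 U hU u hu x hx
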